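/- arXiv:2205.00442 — 5 statements merged into one kernel-verified Lean document; each statement's English description precedes it below -/
import Mathlib

section
/- Let (G, H, (g_v), (c_v), a) be a BNPG game with altruism in which G is the complete graph on a vertex set V of size |V| = n, and let k be an integer with 0 < k < n. If there exists a pure strategy Nash equilibrium in which exactly k players play 1, then |R₁(k)| ≥ k, |R₀(k)| ≥ n − k, and |R₀(k) \ R₁(k)| = |V \ R₁(k)|, where R₀(k) := {v ∈ V : Δg_v(k) + a·∑_{u∈N_v} Δg_u(k) ≤ c_v} and R₁(k) := {v ∈ V : Δg_v(k−1) + a·∑_{u∈N_v} Δg_u(k−1) ≥ c_v}. -/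
/-!
On the complete graph every player sees the total number `k` of players playing 1, so a
unilateral switch of `v` from 0 to 1 (profile with `t` ones to one with `t + 1`) changes `v`'s
utility by exactly its altruistic marginal gain at `t` minus `c v`. In a PSNE the players
playing 1 therefore lie in `R₁(k)` (their deviation moves the count from `k` to `k - 1`) and the
players playing 0 lie in `R₀(k)`. The three claims follow by counting, the last one because
`V \ R₁(k)` then consists of players playing 0 and so lies in `R₀(k)`.
-/

open Finset

def dg (g : ℕ → ℝ) (t : ℕ) : ℝ := g (t + 1) - g t

def nv {W : Type*} [Fintype W] [DecidableEq W] (G : SimpleGraph W) [DecidableRel G.Adj]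
    (x : W → Bool) (v : W) : ℕ :=
  ((G.neighborFinset v).filter (fun u => x u = true)).card

def util {W : Type*} [Fintype W] [DecidableEq W] (G : SimpleGraph W) [DecidableRel G.Adj]
    (N : W → Finset W) (g : W → ℕ → ℝ) (c : W → ℝ) (a : ℝ)
    (x : W → Bool) (v : W) : ℝ :=
  g v ((x v).toNat + nv G x v)
    + a * ∑ u ∈ N v, g u ((x u).toNat + nv G x u)
    - c v * (x v).toNat

def isPSNE {W : Type*} [Fintype W] [DecidableEq W] (G : SimpleGraph W) [DecidableRel G.Adj]
    (N : W → Finset W) (g : W → ℕ → ℝ) (c : W → ℝ) (a : ℝ) (x : W → Bool) : Prop :=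
  ∀ v : W, ∀ b : Bool,
    util G N g c a x v ≥ util G N g c a (Function.update x v b) v

section CompleteGraph

variable {W : Type*} [Fintype W] [DecidableEq W]

def numOnes (x : W → Bool) : ℕ := #{v | x v = true}

def altruisticGain (N : W → Finset W) (g : W → ℕ → ℝ) (a : ℝ) (v : W) (t : ℕ) : ℝ :=
  dg (g v) t + a * ∑ u ∈ N v, dg (g u) t

lemma toNat_add_nv_top (x : W → Bool) (v : W) :
    (x v).toNat + nv ⊤ x v = numOnes x := by
  have hnbhd : (⊤ : SimpleGraph W).neighborFinset v = univ.erase v := by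
    ext w
    simp [eq_comm]
  rw [nv, hnbhd, filter_erase, numOnes]
  cases hv : x v
  · rw [erase_eq_of_notMem (by simp [hv])]
    simp
  · rw [card_erase_of_mem (by simp [hv])]
    have : 0 < #{w | x w = true} := card_pos.2 ⟨v, by simp [hv]⟩
    simp only [Bool.toNat_true]
    omega

lemma util_top (N : W → Finset W) (g : W → ℕ → ℝ) (c : W → ℝ) (a : ℝ) (x : W → Bool) (v : W) :
    util ⊤ N g c a x v =
      g v (numOnes x) + a * ∑ u ∈ N v, g u (numOnes x) - c v * (x v).toNat := by
  simp only [util, toNat_add_nv_top]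

lemma numOnes_update_true {x : W → Bool} {v : W} (hv : x v = false) :
    numOnes (Function.update x v true) = numOnes x + 1 := by
  have : univ.filter (Function.update x v true · = true) = insert v (univ.filter (x · = true)) := by
    ext w
    by_cases hw : w = v <;> simp [Function.update_apply, hw]
  rw [numOnes, this, card_insert_of_notMem (by simp [hv]), numOnes]

lemma numOnes_update_false {x : W → Bool} {v : W} (hv : x v = true) :
    numOnes (Function.update x v false) = numOnes x - 1 := by
  have hrestore := numOnes_update_true (x := Function.update x v false) (v := v) (by simp)
  rw [Function.update_idem, Function.update_eq_self_iff.2 hv.symm] at hrestore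
  omega

lemma util_top_update_true_sub (N : W → Finset W) (g : W → ℕ → ℝ) (c : W → ℝ) (a : ℝ)
    {x : W → Bool} {v : W} (hv : x v = false) :
    util ⊤ N g c a (Function.update x v true) v - util ⊤ N g c a x v =
      altruisticGain N g a v (numOnes x) - c v := by
  simp only [util_top, numOnes_update_true hv, altruisticGain, dg, sum_sub_distrib,
    Function.update_self, hv, Bool.toNat_true, Bool.toNat_false, Nat.cast_one, Nat.cast_zero]
  ring

variable {N : W → Finset W} {g : W → ℕ → ℝ} {c : W → ℝ} {a : ℝ} {x : W → Bool}

lemma isPSNE.altruisticGain_le_of_false (hx : isPSNE ⊤ N g c a x) {v : W} (hv : x v = false) :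
    altruisticGain N g a v (numOnes x) ≤ c v := by
  have := util_top_update_true_sub N g c a hv
  linarith [hx v true]

lemma isPSNE.le_altruisticGain_of_true (hx : isPSNE ⊤ N g c a x) {v : W} (hv : x v = true) :
    c v ≤ altruisticGain N g a v (numOnes x - 1) := by
  have hdiff := util_top_update_true_sub N g c a (x := Function.update x v false) (v := v)
    (by simp)
  rw [Function.update_idem, Function.update_eq_self_iff.2 hv.symm,
    numOnes_update_false hv] at hdiff
  linarith [hx v false]

end CompleteGraph

open scoped Classical

theorem statement1_general {W : Type*} [Fintype W] [DecidableEq W]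
    (N : W → Finset W)
    (g : W → ℕ → ℝ)
    (c : W → ℝ) (a : ℝ)
    (n k : ℕ) (hn : Fintype.card W = n)
    (x : W → Bool)
    (hk : (Finset.univ.filter (fun v : W => x v = true)).card = k)
    (hx : isPSNE ⊤ N g c a x) :
    k ≤ (Finset.univ.filter (fun v : W =>
            c v ≤ dg (g v) (k - 1) + a * ∑ u ∈ N v, dg (g u) (k - 1))).card ∧
    n - k ≤ (Finset.univ.filter (fun v : W =>
            dg (g v) k + a * ∑ u ∈ N v, dg (g u) k ≤ c v)).card ∧
    ((Finset.univ.filter (fun v : W =>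
            dg (g v) k + a * ∑ u ∈ N v, dg (g u) k ≤ c v)) \
        (Finset.univ.filter (fun v : W =>
            c v ≤ dg (g v) (k - 1) + a * ∑ u ∈ N v, dg (g u) (k - 1)))).card =
      (Finset.univ \ (Finset.univ.filter (fun v : W =>
            c v ≤ dg (g v) (k - 1) + a * ∑ u ∈ N v, dg (g u) (k - 1)))).card := by
  subst hk
  set S := univ.filter (fun v : W => x v = true)
  set R₁ := univ.filter (fun v : W => c v ≤ altruisticGain N g a v (#S - 1))
  set R₀ := univ.filter (fun v : W => altruisticGain N g a v #S ≤ c v)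
  have hS_R₁ : S ⊆ R₁ := fun v hv =>
    mem_filter.2 ⟨mem_univ v, hx.le_altruisticGain_of_true (mem_filter.1 hv).2⟩
  have hSc_R₀ : Sᶜ ⊆ R₀ := fun v hv =>
    mem_filter.2 ⟨mem_univ v, hx.altruisticGain_le_of_false (by simpa [S] using hv)⟩
  have hSc : #Sᶜ = n - #S := by rw [card_compl, hn]
  refine ⟨card_le_card hS_R₁, hSc ▸ card_le_card hSc_R₀, ?_⟩
  change #(R₀ \ R₁) = #(univ \ R₁)
  rw [sdiff_eq_inter_compl, ← compl_eq_univ_sdiff,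
    inter_eq_right.2 ((compl_subset_compl.2 hS_R₁).trans hSc_R₀)]

/-- on the complete graph, if a BNPG game with altruism has a PSNE in
which exactly `k` players play 1 (`0 < k < n = |V|`), then `|R₁(k)| ≥ k`,
`|R₀(k)| ≥ n − k` and `|R₀(k) \ R₁(k)| = |V \ R₁(k)|`. -/
theorem statement1 {W : Type*} [Fintype W] [DecidableEq W]
    (N : W → Finset W) (hN : ∀ v : W, ∀ u ∈ N v, (⊤ : SimpleGraph W).Adj v u)
    (g : W → ℕ → ℝ) (hmono : ∀ v, Monotone (g v)) (hnn : ∀ v t, 0 ≤ g v t)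
    (c : W → ℝ) (hc : ∀ v, 0 ≤ c v) (a : ℝ) (ha : 0 ≤ a)
    (n k : ℕ) (hn : Fintype.card W = n) (hk0 : 0 < k) (hkn : k < n)
    (x : W → Bool)
    (hk : (Finset.univ.filter (fun v : W => x v = true)).card = k)
    (hx : isPSNE ⊤ N g c a x) :
    k ≤ (Finset.univ.filter (fun v : W =>
            c v ≤ dg (g v) (k - 1) + a * ∑ u ∈ N v, dg (g u) (k - 1))).card ∧
    n - k ≤ (Finset.univ.filter (fun v : W =>
            dg (g v) k + a * ∑ u ∈ N v, dg (g u) k ≤ c v)).card ∧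
    ((Finset.univ.filter (fun v : W =>
            dg (g v) k + a * ∑ u ∈ N v, dg (g u) k ≤ c v)) \
        (Finset.univ.filter (fun v : W =>
            c v ≤ dg (g v) (k - 1) + a * ∑ u ∈ N v, dg (g u) (k - 1)))).card =
      (Finset.univ \ (Finset.univ.filter (fun v : W =>
            c v ≤ dg (g v) (k - 1) + a * ∑ u ∈ N v, dg (g u) (k - 1)))).card :=
  statement1_general N g c a n k hn x hk hx
end

section
/- Let (G, H, (g_v), (c_v), a) be a BNPG game with altruism in which G is the complete graph on a vertex set V of size |V| = n. Then the game admits a pure strategy Nash equilibrium if and only if at least one of the following holds: (i) the all-zero profile is a PSNE; (ii) the all-one profile is a PSNE; (iii) there exists an integer k with 0 < k < n such that |R₁(k)| ≥ k, |R₀(k)| ≥ n − k, and |R₀(k) \ R₁(k)| = |V \ R₁(k)|, where R₀(k) := {v ∈ V : Δg_v(k) + a·∑_{u∈N_v} Δg_u(k) ≤ c_v} and R₁(k) := {v ∈ V : Δg_v(k−1) + a·∑_{u∈N_v} Δg_u(k−1) ≥ c_v}. -/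
open Finset

open scoped Classical

/-!
On the complete graph every player sees the same number of contributors, so a profile is
determined by its set `S` of contributors and a player's utility depends on `S` only through `#S`
and whether the player itself is in `S`. A unilateral deviation changes `#S` by one, so `S` is an
equilibrium iff every contributor gains at least its cost from the step `#S - 1 → #S` and every
non-contributor gains at most its cost from the step `#S → #S + 1`. For `0 < k < n` a set of size
`k` with `S ⊆ R₁(k)` and `Sᶜ ⊆ R₀(k)` exists iff the cardinality conditions of the theorem hold:
the last one says exactly that `R₁(k)ᶜ ⊆ R₀(k)`.
-/

section Combinatorics

variable {α : Type*} [Fintype α] [DecidableEq α]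

theorem exists_finset_iff_empty_or_univ_or_exists_card (P : Finset α → Prop) :
    (∃ S, P S) ↔ P ∅ ∨ P univ ∨ ∃ k, 0 < k ∧ k < Fintype.card α ∧ ∃ S, #S = k ∧ P S := by
  constructor
  · rintro ⟨S, hS⟩
    rcases S.eq_empty_or_nonempty with rfl | hne
    · exact Or.inl hS
    by_cases huniv : S = univ
    · exact Or.inr (Or.inl (huniv ▸ hS))
    · exact Or.inr (Or.inr ⟨#S, hne.card_pos, (card_lt_iff_ne_univ S).2 huniv, S, rfl, hS⟩)
  · rintro (h | h | ⟨-, -, -, S, -, h⟩) <;> exact ⟨_, h⟩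

theorem card_sdiff_eq_card_univ_sdiff_iff (A B : Finset α) :
    #(B \ A) = #(univ \ A) ↔ univ \ A ⊆ B := by
  have hsub : B \ A ⊆ univ \ A := sdiff_subset_sdiff (subset_univ B) le_rfl
  constructor
  · intro h
    rw [← eq_of_subset_of_card_le hsub h.ge]
    exact sdiff_subset
  · intro h
    congr 1
    exact hsub.antisymm fun v hv => mem_sdiff.2 ⟨h hv, (mem_sdiff.1 hv).2⟩

theorem exists_card_eq_subset_compl_subset_iff (A B : Finset α) {k : ℕ}
    (hk : k ≤ Fintype.card α) :
    (∃ S : Finset α, #S = k ∧ S ⊆ A ∧ Sᶜ ⊆ B) ↔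
      k ≤ #A ∧ Fintype.card α - k ≤ #B ∧ #(B \ A) = #(univ \ A) := by
  rw [card_sdiff_eq_card_univ_sdiff_iff, ← compl_eq_univ_sdiff]
  constructor
  · rintro ⟨S, rfl, hSA, hSB⟩
    refine ⟨card_le_card hSA, ?_, (compl_subset_compl.2 hSA).trans hSB⟩
    simpa [card_compl] using card_le_card hSB
  · rintro ⟨hkA, hkB, hAB⟩
    have hAk : #Aᶜ ≤ Fintype.card α - k := by rw [card_compl]; omega
    obtain ⟨T, hAT, hTB, hT⟩ := exists_subsuperset_card_eq hAB hAk hkB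
    refine ⟨Tᶜ, ?_, compl_le_iff_compl_le.1 hAT, by rwa [compl_compl]⟩
    rw [card_compl, hT]
    omega

end Combinatorics

section CompleteGraph

variable {W : Type*} [DecidableEq W]

def profileOf (S : Finset W) : W → Bool := fun v => decide (v ∈ S)

theorem profileOf_surjective [Fintype W] : Function.Surjective (profileOf (W := W)) :=
  fun x => ⟨univ.filter fun v => x v = true, funext fun v => by simp [profileOf]⟩

theorem profileOf_empty : profileOf (∅ : Finset W) = fun _ => false := by
  funext v; simp [profileOf]

theorem profileOf_univ [Fintype W] : profileOf (univ : Finset W) = fun _ => true := by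
  funext v; simp [profileOf]

theorem update_profileOf (S : Finset W) (v : W) (b : Bool) :
    Function.update (profileOf S) v b = profileOf (if b then insert v S else S.erase v) := by
  funext w
  by_cases hw : w = v
  · subst hw; cases b <;> simp [profileOf]
  · cases b <;> simp [profileOf, hw]

theorem toNat_add_nv_top_profileOf [Fintype W] (S : Finset W) (v : W) :
    (profileOf S v).toNat + nv (⊤ : SimpleGraph W) (profileOf S) v = #S := by
  have hnv : nv (⊤ : SimpleGraph W) (profileOf S) v = #(S.erase v) := by
    unfold nv
    congr 1
    ext w
    simp [profileOf, ne_comm]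
  rw [hnv]
  by_cases hv : v ∈ S
  · rw [card_erase_of_mem hv]
    have := card_pos.2 ⟨v, hv⟩
    simp only [profileOf, hv, decide_true, Bool.toNat_true]
    omega
  · simp [profileOf, hv]

variable [Fintype W] (N : W → Finset W) (g : W → ℕ → ℝ) (c : W → ℝ) (a : ℝ)

theorem util_top_profileOf (S : Finset W) (v : W) :
    util ⊤ N g c a (profileOf S) v =
      g v #S + a * ∑ u ∈ N v, g u #S - if v ∈ S then c v else 0 := by
  simp only [util, toNat_add_nv_top_profileOf]
  by_cases hv : v ∈ S <;> simp [profileOf, hv]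

noncomputable def marginalGain (v : W) (t : ℕ) : ℝ := dg (g v) t + a * ∑ u ∈ N v, dg (g u) t

theorem util_top_profileOf_insert_sub {S : Finset W} {v : W} (hv : v ∉ S) :
    util ⊤ N g c a (profileOf (insert v S)) v - util ⊤ N g c a (profileOf S) v =
      marginalGain N g a v #S - c v := by
  simp only [util_top_profileOf, card_insert_of_notMem hv, mem_insert_self, if_true, hv,
    if_false, marginalGain, dg, sum_sub_distrib]
  ring

/-- The paper's `R₀(k)`. -/
noncomputable def bestResponseZero (k : ℕ) : Finset W :=
  univ.filter fun v => marginalGain N g a v k ≤ c v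

/-- The paper's `R₁(k)`: `k` counts the player itself among the contributors. At `k = 0` the
truncated `k - 1` is harmless, since no player contributes. -/
noncomputable def bestResponseOne (k : ℕ) : Finset W :=
  univ.filter fun v => c v ≤ marginalGain N g a v (k - 1)

theorem forall_util_top_profileOf_update_le_iff (S : Finset W) (v : W) :
    (∀ b, util ⊤ N g c a (Function.update (profileOf S) v b) v ≤ util ⊤ N g c a (profileOf S) v)
      ↔ (v ∈ S → v ∈ bestResponseOne N g c a #S) ∧ (v ∉ S → v ∈ bestResponseZero N g c a #S) := by
  simp only [update_profileOf, Bool.forall_bool, Bool.false_eq_true, ↓reduceIte, bestResponseOne,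
    bestResponseZero, mem_filter, mem_univ, true_and]
  by_cases hv : v ∈ S
  · have hdiff := util_top_profileOf_insert_sub N g c a (notMem_erase v S)
    rw [insert_erase hv, card_erase_of_mem hv] at hdiff
    simp only [insert_eq_of_mem hv, le_refl, and_true, hv, not_true_eq_false, false_implies,
      true_implies]
    rw [← sub_nonneg, hdiff, sub_nonneg]
  · have hdiff := util_top_profileOf_insert_sub N g c a hv
    simp only [erase_eq_of_notMem hv, le_refl, true_and, hv, false_implies, not_false_eq_true,
      true_implies]
    rw [← sub_nonpos, hdiff, sub_nonpos]

theorem isPSNE_top_profileOf_iff (S : Finset W) :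
    isPSNE ⊤ N g c a (profileOf S) ↔
      S ⊆ bestResponseOne N g c a #S ∧ Sᶜ ⊆ bestResponseZero N g c a #S := by
  simp only [isPSNE, ge_iff_le, forall_util_top_profileOf_update_le_iff, forall_and,
    subset_iff, mem_compl]

end CompleteGraph

theorem statement3_general {W : Type*} [Fintype W] [DecidableEq W]
    (N : W → Finset W)
    (g : W → ℕ → ℝ)
    (c : W → ℝ) (a : ℝ)
    (n : ℕ) (hn : Fintype.card W = n) :
    (∃ x : W → Bool, isPSNE ⊤ N g c a x) ↔
      (isPSNE ⊤ N g c a (fun _ => false) ∨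
       isPSNE ⊤ N g c a (fun _ => true) ∨
       ∃ k : ℕ, 0 < k ∧ k < n ∧
        k ≤ (Finset.univ.filter (fun v : W =>
                c v ≤ dg (g v) (k - 1) + a * ∑ u ∈ N v, dg (g u) (k - 1))).card ∧
        n - k ≤ (Finset.univ.filter (fun v : W =>
                dg (g v) k + a * ∑ u ∈ N v, dg (g u) k ≤ c v)).card ∧
        ((Finset.univ.filter (fun v : W =>
                dg (g v) k + a * ∑ u ∈ N v, dg (g u) k ≤ c v)) \
            (Finset.univ.filter (fun v : W =>
                c v ≤ dg (g v) (k - 1) + a * ∑ u ∈ N v, dg (g u) (k - 1)))).card =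
          (Finset.univ \ (Finset.univ.filter (fun v : W =>
                c v ≤ dg (g v) (k - 1) + a * ∑ u ∈ N v, dg (g u) (k - 1)))).card) := by
  subst hn
  rw [profileOf_surjective.exists, exists_finset_iff_empty_or_univ_or_exists_card,
    profileOf_empty, profileOf_univ]
  refine or_congr_right (or_congr_right (exists_congr fun k =>
    and_congr_right fun _ => and_congr_right fun hk => ?_))
  calc (∃ S : Finset W, #S = k ∧ isPSNE ⊤ N g c a (profileOf S))
      ↔ ∃ S : Finset W, #S = k ∧
          S ⊆ bestResponseOne N g c a k ∧ Sᶜ ⊆ bestResponseZero N g c a k :=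
        exists_congr fun S => and_congr_right fun hS => by rw [isPSNE_top_profileOf_iff, hS]
    _ ↔ _ := exists_card_eq_subset_compl_subset_iff _ _ hk.le

/-- on the complete graph, a BNPG game with altruism admits a PSNE iff
the all-zero profile is a PSNE, or the all-one profile is a PSNE, or there is `k`
with `0 < k < n` such that `|R₁(k)| ≥ k`, `|R₀(k)| ≥ n − k` and
`|R₀(k) \ R₁(k)| = |V \ R₁(k)|`. -/
theorem statement3 {W : Type*} [Fintype W] [DecidableEq W]
    (N : W → Finset W) (hN : ∀ v : W, ∀ u ∈ N v, (⊤ : SimpleGraph W).Adj v u)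
    (g : W → ℕ → ℝ) (hmono : ∀ v, Monotone (g v)) (hnn : ∀ v t, 0 ≤ g v t)
    (c : W → ℝ) (hc : ∀ v, 0 ≤ c v) (a : ℝ) (ha : 0 ≤ a)
    (n : ℕ) (hn : Fintype.card W = n) :
    (∃ x : W → Bool, isPSNE ⊤ N g c a x) ↔
      (isPSNE ⊤ N g c a (fun _ => false) ∨
       isPSNE ⊤ N g c a (fun _ => true) ∨
       ∃ k : ℕ, 0 < k ∧ k < n ∧
        k ≤ (Finset.univ.filter (fun v : W =>
                c v ≤ dg (g v) (k - 1) + a * ∑ u ∈ N v, dg (g u) (k - 1))).card ∧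
        n - k ≤ (Finset.univ.filter (fun v : W =>
                dg (g v) k + a * ∑ u ∈ N v, dg (g u) k ≤ c v)).card ∧
        ((Finset.univ.filter (fun v : W =>
                dg (g v) k + a * ∑ u ∈ N v, dg (g u) k ≤ c v)) \
            (Finset.univ.filter (fun v : W =>
                c v ≤ dg (g v) (k - 1) + a * ∑ u ∈ N v, dg (g u) (k - 1)))).card =
          (Finset.univ \ (Finset.univ.filter (fun v : W =>
                c v ≤ dg (g v) (k - 1) + a * ∑ u ∈ N v, dg (g u) (k - 1)))).card) :=
  statement3_general N g c a n hn
end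

section
/- Let (G=(V,E), p) be a directed public goods game and let ε > 0. Construct the BNPG game with symmetric altruism on V' = {u_in : u∈V} ∪ {u_out : u∈V} with input edges E'' = {{u_in,u_out} : u∈V} ∪ {{u_out,v_in} : (u,v)∈E}, altruistic edges {{u_in,u_out} : u∈V} (so N_{u_in} = {u_out} and N_{u_out} = {u_in}), a = 1, c_{u_in} = 1+2ε, c_{u_out} = p, g_{u_in}(x) = 1 if x > 0 and 0 if x = 0, and g_{u_out}(x) = 0 for all x. Then in every ε-Nash equilibrium (Δ_v)_{v∈V'} of this BNPG game, Δ_{u_in}(0) = 1 for every u ∈ V; indeed, for every u ∈ V and every pure profile x_{−u_in} of the other players, U_{u_in}(0, x_{−u_in}) > U_{u_in}(1, x_{−u_in}) + ε. -/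
open Finset

/-- `Y(0) = 0` and `Y(t) = 1` for `t > 0`. -/
def Y (t : ℕ) : ℝ := if t = 0 then 0 else 1

/-- Probability of the pure profile `x` under the product distribution in which
player `v` deterministically plays `b` and every other player `u` plays 1 with
probability `q u` (and 0 with probability `1 - q u`). -/
def weight {W : Type*} [Fintype W] [DecidableEq W]
    (q : W → ℝ) (v : W) (b : Bool) (x : W → Bool) : ℝ :=
  ∏ u : W, if u = v then (if x u = b then 1 else 0)
    else (if x u then q u else 1 - q u)

/-- Expected utility of player `v` playing `b` in a BNPG game with altruism when the
other players mix independently (`q u` = probability that `u` plays 1). -/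
def expUtil {W : Type*} [Fintype W] [DecidableEq W]
    (G : SimpleGraph W) [DecidableRel G.Adj]
    (N : W → Finset W) (g : W → ℕ → ℝ) (c : W → ℝ) (a : ℝ)
    (q : W → ℝ) (v : W) (b : Bool) : ℝ :=
  ∑ x : W → Bool, weight q v b x * util G N g c a x v

/-- `q` (with `q v` = probability that `v` plays 1) is an `ε`-Nash equilibrium of a
BNPG game with altruism: every strategy in the support of a player's mixed strategy
is an `ε`-best response. -/
def isEpsNE {W : Type*} [Fintype W] [DecidableEq W]
    (G : SimpleGraph W) [DecidableRel G.Adj]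
    (N : W → Finset W) (g : W → ℕ → ℝ) (c : W → ℝ) (a : ℝ)
    (q : W → ℝ) (ε : ℝ) : Prop :=
  (∀ v : W, 0 ≤ q v ∧ q v ≤ 1) ∧
  ∀ v : W,
    (0 < q v → ∀ b : Bool,
      expUtil G N g c a q v true ≥ expUtil G N g c a q v b - ε) ∧
    (q v < 1 → ∀ b : Bool,
      expUtil G N g c a q v false ≥ expUtil G N g c a q v b - ε)

section Construction

variable {V : Type*} [Fintype V] [DecidableEq V]

/-- Adjacency (as a Boolean function) of the input network of the constructed BNPG
game: `Sum.inl u` is `u_in`, `Sum.inr u` is `u_out`; `w_in` is adjacent to `u_out`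
iff `w = u` or `(u,w)` is an edge of the directed public goods game. -/
def adjPG (A : V → V → Prop) [DecidableRel A] : V ⊕ V → V ⊕ V → Bool
  | Sum.inl win, Sum.inr uout => decide (win = uout) || decide (A uout win)
  | Sum.inr uout, Sum.inl win => decide (win = uout) || decide (A uout win)
  | _, _ => false

/-- Input network of the constructed BNPG game. -/
def GPG (A : V → V → Prop) [DecidableRel A] : SimpleGraph (V ⊕ V) where
  Adj a b := adjPG A a b = true
  symm := ⟨by rintro (u | u) (w | w) h <;> simp_all [adjPG]⟩
  loopless := ⟨by rintro (u | u) h <;> simp [adjPG] at h⟩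

instance (A : V → V → Prop) [DecidableRel A] : DecidableRel (GPG A).Adj :=
  fun a b => inferInstanceAs (Decidable (adjPG A a b = true))

/-- Altruistic network: `u_in` and `u_out` are altruistically linked. -/
def NPG : V ⊕ V → Finset (V ⊕ V)
  | Sum.inl u => {Sum.inr u}
  | Sum.inr u => {Sum.inl u}

/-- Externality functions: `g_{u_in}(x) = 1` iff `x > 0`, and `g_{u_out} ≡ 0`. -/
def gPG : V ⊕ V → ℕ → ℝ
  | Sum.inl _ => fun t => if t = 0 then 0 else 1
  | Sum.inr _ => fun _ => 0

/-- Costs: `c_{u_in} = 1 + 2ε` and `c_{u_out} = p`. -/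
def cPG (p ε : ℝ) : V ⊕ V → ℝ
  | Sum.inl _ => 1 + 2 * ε
  | Sum.inr _ => p

end Construction

/-! In the constructed game the player `u_in` has no externality towards `u_out`
(`g_{u_out} ≡ 0`), so buying costs `1 + 2ε` and gains at most `Y(1 + n) - Y(n) ≤ 1`:
playing 0 beats playing 1 by at least `2ε` against every pure profile of the others.
Averaging over the others' mixed strategies, the same gap holds in expectation, so
playing 1 is never an `ε`-best response. -/

section ExpectedUtility

variable {W : Type*} [Fintype W] [DecidableEq W]

lemma weight_eq_zero_of_ne (q : W → ℝ) {v : W} {b : Bool} {x : W → Bool} (h : x v ≠ b) :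
    weight q v b x = 0 :=
  Finset.prod_eq_zero (Finset.mem_univ v) (by simp [h])

lemma weight_nonneg {q : W → ℝ} (hq : ∀ u, 0 ≤ q u ∧ q u ≤ 1) (v : W) (b : Bool)
    (x : W → Bool) : 0 ≤ weight q v b x := by
  refine Finset.prod_nonneg fun u _ => ?_
  have := hq u
  split_ifs <;> linarith

lemma weight_update (q : W → ℝ) (v : W) (b b' : Bool) (x : W → Bool) :
    weight q v b (Function.update x v b) = weight q v b' (Function.update x v b') := by
  refine Finset.prod_congr rfl fun u _ => ?_
  by_cases h : u = v <;> simp [h]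

lemma sum_weight (q : W → ℝ) (v : W) (b : Bool) : ∑ x : W → Bool, weight q v b x = 1 := by
  simp only [weight]
  rw [← Fintype.prod_sum (fun u (t : Bool) => if u = v then (if t = b then (1 : ℝ) else 0)
    else (if t then q u else 1 - q u))]
  refine Finset.prod_eq_one fun u _ => ?_
  by_cases h : u = v
  · cases b <;> simp [h]
  · simp [h]

lemma sum_weight_mul (q : W → ℝ) (v : W) (b : Bool) (f : (W → Bool) → ℝ) :
    ∑ x, weight q v b x * f x = ∑ x, weight q v false x * f (Function.update x v b) := by
  cases b
  · refine Finset.sum_congr rfl fun x _ => ?_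
    by_cases hx : x v = false
    · rw [Function.update_eq_self_iff.2 hx.symm]
    · rw [weight_eq_zero_of_ne q hx, zero_mul, zero_mul]
  · have hflip : Function.Involutive fun x : W → Bool => Function.update x v (!x v) := by
      intro x
      simp
    rw [← hflip.bijective.sum_comp]
    refine Finset.sum_congr rfl fun x _ => ?_
    by_cases hx : x v = false
    · rw [hx, Bool.not_false, weight_update q v true false, Function.update_eq_self_iff.2 hx.symm]
    · rw [weight_eq_zero_of_ne q hx, weight_eq_zero_of_ne q (by simpa using hx), zero_mul,
        zero_mul]

lemma expUtil_eq_sum (G : SimpleGraph W) [DecidableRel G.Adj] (N : W → Finset W)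
    (g : W → ℕ → ℝ) (c : W → ℝ) (a : ℝ) (q : W → ℝ) (v : W) (b : Bool) :
    expUtil G N g c a q v b =
      ∑ x, weight q v false x * util G N g c a (Function.update x v b) v :=
  sum_weight_mul q v b _

lemma expUtil_add_le_of_forall_util_add_le (G : SimpleGraph W) [DecidableRel G.Adj]
    (N : W → Finset W) (g : W → ℕ → ℝ) (c : W → ℝ) (a : ℝ) {q : W → ℝ}
    (hq : ∀ u, 0 ≤ q u ∧ q u ≤ 1) {v : W} {b b' : Bool} {δ : ℝ}
    (h : ∀ x : W → Bool, util G N g c a (Function.update x v b) v + δ ≤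
      util G N g c a (Function.update x v b') v) :
    expUtil G N g c a q v b + δ ≤ expUtil G N g c a q v b' := by
  rw [expUtil_eq_sum, expUtil_eq_sum]
  calc ∑ x, weight q v false x * util G N g c a (Function.update x v b) v + δ
      = ∑ x, weight q v false x * (util G N g c a (Function.update x v b) v + δ) := by
        simp only [mul_add, Finset.sum_add_distrib, ← Finset.sum_mul, sum_weight, one_mul]
    _ ≤ ∑ x, weight q v false x * util G N g c a (Function.update x v b') v :=
        Finset.sum_le_sum fun x _ =>
          mul_le_mul_of_nonneg_left (h x) (weight_nonneg hq v false x)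

end ExpectedUtility

lemma nv_update_self {W : Type*} [Fintype W] [DecidableEq W] (G : SimpleGraph W)
    [DecidableRel G.Adj] (x : W → Bool) (v : W) (b : Bool) :
    nv G (Function.update x v b) v = nv G x v := by
  refine congrArg Finset.card (Finset.filter_congr fun u hu => ?_)
  rw [Function.update_of_ne ((G.mem_neighborFinset v u).1 hu).ne']

lemma util_inl_update_true_add_le {V : Type*} [Fintype V] [DecidableEq V]
    (A : V → V → Prop) [DecidableRel A] (p ε : ℝ) (u : V) (x : V ⊕ V → Bool) :
    util (GPG A) NPG gPG (cPG p ε) 1 (Function.update x (Sum.inl u) true) (Sum.inl u)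
        + 2 * ε ≤
      util (GPG A) NPG gPG (cPG p ε) 1 (Function.update x (Sum.inl u) false) (Sum.inl u) := by
  simp only [util, NPG, gPG, cPG, Finset.sum_singleton, Function.update_self,
    nv_update_self, Bool.toNat_true, Bool.toNat_false]
  split_ifs <;> push_cast <;> linarith

/-- in every `ε`-Nash equilibrium of the BNPG game with (symmetric)
altruism constructed from a directed public goods game `(A, p)`, every player `u_in`
plays 0 with probability 1; indeed against every pure profile of the other players,
playing 0 is better than playing 1 by more than `ε`. -/
theorem statement8 {V : Type*} [Fintype V] [DecidableEq V]
    (A : V → V → Prop) [DecidableRel A] (p ε : ℝ) (hε : 0 < ε)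
    (q : V ⊕ V → ℝ)
    (hq : isEpsNE (GPG A) NPG gPG (cPG p ε) 1 q ε) :
    (∀ u : V, q (Sum.inl u) = 0) ∧
    (∀ u : V, ∀ x : V ⊕ V → Bool,
      util (GPG A) NPG gPG (cPG p ε) 1
          (Function.update x (Sum.inl u) false) (Sum.inl u) >
        util (GPG A) NPG gPG (cPG p ε) 1
          (Function.update x (Sum.inl u) true) (Sum.inl u) + ε) := by
  obtain ⟨hq01, hbest⟩ := hq
  refine ⟨fun u => ?_, fun u x => ?_⟩
  · have hgap := expUtil_add_le_of_forall_util_add_le (GPG A) NPG gPG (cPG p ε) 1 hq01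
      (util_inl_update_true_add_le A p ε u)
    by_contra hne
    have hpos : 0 < q (Sum.inl u) := lt_of_le_of_ne (hq01 _).1 (Ne.symm hne)
    linarith [(hbest (Sum.inl u)).1 hpos false]
  · linarith [util_inl_update_true_add_le A p ε u x]
end

section
/- Let (G=(V,E), p) be a directed public goods game and ε > 0, and consider the constructed BNPG game with symmetric altruism on V' = {u_in, u_out : u∈V} with input edges {{u_in,u_out} : u∈V} ∪ {{u_out,v_in} : (u,v)∈E}, altruistic edges {{u_in,u_out} : u∈V}, a = 1, c_{u_in} = 1+2ε, c_{u_out} = p, g_{u_in}(x) = 1 if x > 0 and 0 if x = 0, and g_{u_out} ≡ 0. Then for every pure strategy profile x = (x_w)_{w∈V'} satisfying x_{u_in} = 0 for all u ∈ V, and for every v ∈ V, the BNPG utility of v_out equals the directed public goods utility of v: U_{v_out}(x) = Y(x'_v + n'^{in}_v) − p·x'_v, where x'_u := x_{u_out} for all u ∈ V and n'^{in}_v is the number of in-neighbors u of v in G with x'_u = 1. -/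
open Finset

/-
In the constructed game `v_out` has no externality of its own and, through its altruistic link
with weight `1`, collects exactly `g_{v_in}`. When every `u_in` plays `0`, the only `G`-neighbours
of `v_in` that can play `1` are `v_out` and the `u_out` with `(u, v) ∈ E`, so
`g_{v_in}(x_{v_in} + n_{v_in}) = Y(x'_v + n'^{in}_v)`: both sides vanish exactly when `v` and all
its in-neighbours play `0`.
-/

lemma Y_congr {m n : ℕ} (h : m = 0 ↔ n = 0) : Y m = Y n := by
  simp only [Y, h]

lemma toNat_add_card_filter_eq_zero_iff {V : Type*} [Fintype V] (A : V → V → Prop)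
    [DecidableRel A] (y : V → Bool) (v : V) :
    (y v).toNat + (Finset.univ.filter (fun u : V => A u v ∧ y u = true)).card = 0 ↔
      y v = false ∧ ∀ u, A u v → y u = false := by
  simp [Finset.filter_eq_empty_iff]

section Construction

variable {V : Type*} [DecidableEq V] (A : V → V → Prop) [DecidableRel A]

lemma GPG_adj_inl_iff (v : V) (w : V ⊕ V) :
    (GPG A).Adj (Sum.inl v) w ↔ w = Sum.inr v ∨ ∃ u, A u v ∧ w = Sum.inr u := by
  rcases w with u | u
  · simp [GPG, adjPG]
  · simp only [GPG, adjPG, Bool.or_eq_true, decide_eq_true_eq, Sum.inr.injEq]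
    grind

lemma nv_GPG_inl_eq_zero_iff [Fintype V] (x : V ⊕ V → Bool) (v : V) :
    nv (GPG A) x (Sum.inl v) = 0 ↔
      x (Sum.inr v) = false ∧ ∀ u, A u v → x (Sum.inr u) = false := by
  simp only [nv, Finset.card_eq_zero, Finset.filter_eq_empty_iff, SimpleGraph.mem_neighborFinset,
    GPG_adj_inl_iff, Bool.not_eq_true]
  constructor
  · intro h
    exact ⟨h (Or.inl rfl), fun u hu => h (Or.inr ⟨u, hu, rfl⟩)⟩
  · rintro ⟨hv, hin⟩ w (rfl | ⟨u, hu, rfl⟩)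
    exacts [hv, hin u hu]

lemma util_GPG_inr [Fintype V] (p ε : ℝ) (x : V ⊕ V → Bool) (v : V) :
    util (GPG A) NPG gPG (cPG p ε) 1 x (Sum.inr v) =
      gPG (Sum.inl v) ((x (Sum.inl v)).toNat + nv (GPG A) x (Sum.inl v))
        - p * (x (Sum.inr v)).toNat := by
  simp [util, NPG, gPG, cPG]

end Construction

theorem statement9_general {V : Type*} [Fintype V] [DecidableEq V]
    (A : V → V → Prop) [DecidableRel A] (p ε : ℝ)
    (x : V ⊕ V → Bool) (hx : ∀ u : V, x (Sum.inl u) = false) :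
    ∀ v : V,
      util (GPG A) NPG gPG (cPG p ε) 1 x (Sum.inr v) =
        Y ((x (Sum.inr v)).toNat
            + (Finset.univ.filter (fun u : V => A u v ∧ x (Sum.inr u) = true)).card)
          - p * (x (Sum.inr v)).toNat := by
  intro v
  rw [util_GPG_inr, hx, Bool.toNat_false, zero_add]
  congr 1
  show Y _ = Y _
  exact Y_congr ((nv_GPG_inl_eq_zero_iff A x v).trans
    (toNat_add_card_filter_eq_zero_iff A (fun u => x (Sum.inr u)) v).symm)

/-- in the BNPG game constructed from a directed public goods game
`(A, p)`, for every pure profile in which all the `u_in` players play 0, the BNPG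
utility of `v_out` equals the directed public goods utility of `v` under the induced
profile `x' u = x u_out`. -/
theorem statement9 {V : Type*} [Fintype V] [DecidableEq V]
    (A : V → V → Prop) [DecidableRel A] (p ε : ℝ) (hε : 0 < ε)
    (x : V ⊕ V → Bool) (hx : ∀ u : V, x (Sum.inl u) = false) :
    ∀ v : V,
      util (GPG A) NPG gPG (cPG p ε) 1 x (Sum.inr v) =
        Y ((x (Sum.inr v)).toNat
            + (Finset.univ.filter (fun u : V => A u v ∧ x (Sum.inr u) = true)).card)
          - p * (x (Sum.inr v)).toNat :=
  statement9_general A p ε x hx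
end

section
/- Let n ≥ 1, let g_{v_1}, …, g_{v_n} : ℕ → ℝ be nondecreasing functions, and let c ≥ 0. Define f(x) := 1 + ⌊(x−2)/n⌋ and h(x) := x − (2 + n·(f(x)−1)), and define g : ℕ → ℝ recursively by g(x) = c·x for x ∈ {0,1,2} and g(x) = g(x−1) + Δg_{v_{f(x−1)}}(h(x−1)) for x > 2. Then: (i) Δg(0) = Δg(1) = c; (ii) g is nondecreasing; and (iii) for every i ∈ [n] and every integer t with 0 ≤ t ≤ n−1, Δg(2 + n·(i−1) + t) = Δg_{v_i}(t) = g_{v_i}(t+1) − g_{v_i}(t). -/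
/-- `f(x) = 1 + ⌊(x−2)/n⌋`. -/
def fIdx (n x : ℕ) : ℕ := 1 + (x - 2) / n

/-- `h(x) = x − (2 + n(f(x)−1))`. -/
def hOff (n x : ℕ) : ℕ := x - (2 + n * (fIdx n x - 1))

/-- The common externality function of the fully homogeneous game:
`g(x) = c·x` for `x ∈ {0,1,2}` and `g(x) = g(x−1) + Δg_{v_{f(x−1)}}(h(x−1))` for
`x > 2`, where the family `(g_{v_i})_i` is given by `gv`. -/
def gg (n : ℕ) (gv : ℕ → ℕ → ℝ) (c : ℝ) : ℕ → ℝ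
  | 0 => 0
  | 1 => c
  | 2 => c * 2
  | x + 3 => gg n gv c (x + 2) + dg (gv (fIdx n (x + 2))) (hOff n (x + 2))

/-! Writing `x = 2 + n k + t` with `t < n` gives `f(x) = k + 1` and `h(x) = t`, so the increment
of `g` at `x` is exactly `Δg_{v_{k+1}}(t)`. Every increment of `g` is thus either `c` or an
increment of some nondecreasing `g_{v_i}`, hence nonnegative. -/

theorem monotone_iff_forall_dg_nonneg {g : ℕ → ℝ} : Monotone g ↔ ∀ t, 0 ≤ dg g t := by
  refine ⟨fun h t => sub_nonneg.2 (h t.le_succ), fun h => monotone_nat_of_le_succ fun t => ?_⟩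
  exact sub_nonneg.1 (h t)

theorem fIdx_block {n : ℕ} (k : ℕ) {t : ℕ} (ht : t < n) : fIdx n (2 + n * k + t) = k + 1 := by
  have hn : 0 < n := by omega
  rw [fIdx, show 2 + n * k + t - 2 = t + n * k by omega, Nat.add_mul_div_left _ _ hn,
    Nat.div_eq_of_lt ht]
  omega

theorem hOff_block {n : ℕ} (k : ℕ) {t : ℕ} (ht : t < n) : hOff n (2 + n * k + t) = t := by
  rw [hOff, fIdx_block k ht, Nat.add_sub_cancel]
  omega

section gg

variable (n : ℕ) (gv : ℕ → ℕ → ℝ) (c : ℝ)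

theorem dg_gg_zero : dg (gg n gv c) 0 = c := by
  simp [dg, gg]

theorem dg_gg_one : dg (gg n gv c) 1 = c := by
  simp only [dg, gg]
  ring

theorem dg_gg_add_two (x : ℕ) :
    dg (gg n gv c) (x + 2) = dg (gv (fIdx n (x + 2))) (hOff n (x + 2)) := by
  simp only [dg, gg]
  ring

theorem dg_gg_block (k : ℕ) {t : ℕ} (ht : t < n) :
    dg (gg n gv c) (2 + n * k + t) = dg (gv (k + 1)) t := by
  have h := dg_gg_add_two n gv c (n * k + t)
  rwa [show n * k + t + 2 = 2 + n * k + t by omega, fIdx_block k ht, hOff_block k ht] at h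

theorem monotone_gg (hmono : ∀ i, Monotone (gv i)) (hc : 0 ≤ c) : Monotone (gg n gv c) := by
  refine monotone_iff_forall_dg_nonneg.2 fun t => ?_
  match t with
  | 0 => exact (dg_gg_zero n gv c).symm ▸ hc
  | 1 => exact (dg_gg_one n gv c).symm ▸ hc
  | x + 2 => exact dg_gg_add_two n gv c x ▸ monotone_iff_forall_dg_nonneg.1 (hmono _) _

end gg

theorem statement11_general (n : ℕ) (gv : ℕ → ℕ → ℝ)
    (hmono : ∀ i, Monotone (gv i)) (c : ℝ) (hc : 0 ≤ c) :
    (dg (gg n gv c) 0 = c ∧ dg (gg n gv c) 1 = c) ∧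
    Monotone (gg n gv c) ∧
    (∀ i : ℕ, 1 ≤ i → i ≤ n → ∀ t : ℕ, t ≤ n - 1 →
      dg (gg n gv c) (2 + n * (i - 1) + t) = dg (gv i) t) := by
  refine ⟨⟨dg_gg_zero n gv c, dg_gg_one n gv c⟩, monotone_gg n gv c hmono hc, ?_⟩
  intro i hi hin t ht
  obtain ⟨k, rfl⟩ : ∃ k, i = k + 1 := ⟨i - 1, by omega⟩
  simpa using dg_gg_block n gv c k (show t < n by omega)

/-- for `n ≥ 1`, nondecreasing functions `g_{v_1}, …, g_{v_n}` and
`c ≥ 0`, the recursively defined `g` satisfies: (i) `Δg(0) = Δg(1) = c`;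
(ii) `g` is nondecreasing; (iii) `Δg(2 + n(i−1) + t) = Δg_{v_i}(t)` for every
`i ∈ [n]` and `0 ≤ t ≤ n−1`. -/
theorem statement11 (n : ℕ) (hn : 1 ≤ n) (gv : ℕ → ℕ → ℝ)
    (hmono : ∀ i, Monotone (gv i)) (c : ℝ) (hc : 0 ≤ c) :
    (dg (gg n gv c) 0 = c ∧ dg (gg n gv c) 1 = c) ∧
    Monotone (gg n gv c) ∧
    (∀ i : ℕ, 1 ≤ i → i ≤ n → ∀ t : ℕ, t ≤ n - 1 →
      dg (gg n gv c) (2 + n * (i - 1) + t) = dg (gv i) t) :=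
  statement11_general n gv hmono c hc
end
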